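/- arXiv:1802.09242 — 3 statements merged into one kernel-verified Lean document; each statement's English description precedes it below -/
import Mathlib

section
/- Let T > 0 and let φ : [0,T] → ℝ be Lebesgue integrable. Then for every θ ∈ [0,1] there exists a Lebesgue-measurable set E ⊆ [0,T] with Lebesgue measure equal to θ·T such that ∫_E φ(t) dt = θ · ∫_0^T φ(t) dt. -/
/-!
Identify `(0, T]` with the circle `ℝ / Tℤ` and slide an arc of length `c = θT` around it. With
`F` the primitive of `φ`, the integral of `φ` over the arc starting at `x` exceeds its mean value
`(c / T) F(T)` by `Ψ(y) - Ψ(x)`, where `y` is the other end of the arc and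
`Ψ(s) = F(s) - (s / T) F(T)` is the primitive with its linear trend removed (so `Ψ(0) = Ψ(T)`).
Starting the arc at a maximum of `Ψ` gives an integral at most the mean, starting it at a minimum
one at least the mean, and the integral depends continuously on the starting point.
-/

open MeasureTheory Set

/-- The arc `(x, x + c]` of the circle `ℝ / Tℤ`, represented inside `(0, T]`. -/
def wrappedIoc (T x c : ℝ) : Set ℝ :=
  Ioc x (min (x + c) T) ∪ Ioc 0 (x + c - T)

noncomputable def wrappedIncrement (F : ℝ → ℝ) (T c x : ℝ) : ℝ :=
  F (min (x + c) T) - F x + F (max (x + c - T) 0)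

section Increment

variable {F : ℝ → ℝ} {T c : ℝ}

theorem continuousOn_wrappedIncrement (hF : ContinuousOn F (Icc 0 T)) (hc₀ : 0 ≤ c)
    (hcT : c ≤ T) : ContinuousOn (wrappedIncrement F T c) (Icc 0 T) := by
  have hmin : MapsTo (fun x => min (x + c) T) (Icc 0 T) (Icc 0 T) := fun x hx =>
    ⟨le_min (by linarith [hx.1]) (hx.1.trans hx.2), min_le_right _ _⟩
  have hmax : MapsTo (fun x => max (x + c - T) 0) (Icc 0 T) (Icc 0 T) := fun x hx =>
    ⟨le_max_right _ _, max_le (by linarith [hx.2]) (hx.1.trans hx.2)⟩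
  exact ((hF.comp (by fun_prop) hmin).sub hF).add (hF.comp (by fun_prop) hmax)

theorem exists_wrappedIncrement_sub_eq (hT : 0 < T) (hF₀ : F 0 = 0) (hc₀ : 0 ≤ c)
    (hcT : c ≤ T) {x : ℝ} (hx : x ∈ Icc 0 T) :
    ∃ y ∈ Icc 0 T, wrappedIncrement F T c x - c / T * F T =
      (F y - y / T * F T) - (F x - x / T * F T) := by
  rcases le_total (x + c) T with hle | hlt
  · refine ⟨x + c, ⟨by linarith [hx.1], hle⟩, ?_⟩
    rw [wrappedIncrement, min_eq_left hle, max_eq_right (by linarith), hF₀]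
    ring
  · refine ⟨x + c - T, ⟨by linarith, by linarith [hx.2]⟩, ?_⟩
    rw [wrappedIncrement, min_eq_right hlt, max_eq_left (by linarith)]
    field_simp
    ring

theorem exists_wrappedIncrement_eq (hT : 0 < T) (hF₀ : F 0 = 0) (hF : ContinuousOn F (Icc 0 T))
    (hc₀ : 0 ≤ c) (hcT : c ≤ T) : ∃ x ∈ Icc 0 T, wrappedIncrement F T c x = c / T * F T := by
  have hΨ : ContinuousOn (fun s => F s - s / T * F T) (Icc 0 T) := hF.sub (by fun_prop)
  have hne : (Icc 0 T).Nonempty := nonempty_Icc.mpr hT.le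
  obtain ⟨xmin, hxmin, hmin⟩ := isCompact_Icc.exists_isMinOn hne hΨ
  obtain ⟨xmax, hxmax, hmax⟩ := isCompact_Icc.exists_isMaxOn hne hΨ
  have hlow : c / T * F T ≤ wrappedIncrement F T c xmin := by
    obtain ⟨y, hy, hdiff⟩ := exists_wrappedIncrement_sub_eq hT hF₀ hc₀ hcT hxmin
    linarith [isMinOn_iff.mp hmin y hy]
  have hhigh : wrappedIncrement F T c xmax ≤ c / T * F T := by
    obtain ⟨y, hy, hdiff⟩ := exists_wrappedIncrement_sub_eq hT hF₀ hc₀ hcT hxmax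
    linarith [isMaxOn_iff.mp hmax y hy]
  exact isPreconnected_Icc.intermediate_value hxmax hxmin
    (continuousOn_wrappedIncrement hF hc₀ hcT) ⟨hhigh, hlow⟩

end Increment

section Arc

variable {T c x : ℝ}

theorem disjoint_wrappedIoc (hcT : c ≤ T) :
    Disjoint (Ioc x (min (x + c) T)) (Ioc 0 (x + c - T)) :=
  disjoint_left.mpr fun _ h₁ h₂ => by linarith [h₁.1, h₂.2]

theorem wrappedIoc_subset_Icc (hcT : c ≤ T) (hx : x ∈ Icc 0 T) : wrappedIoc T x c ⊆ Icc 0 T := by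
  rintro t (⟨h₁, h₂⟩ | ⟨h₁, h₂⟩)
  · exact ⟨by linarith [hx.1], h₂.trans (min_le_right _ _)⟩
  · exact ⟨h₁.le, by linarith [hx.2]⟩

theorem measurableSet_wrappedIoc : MeasurableSet (wrappedIoc T x c) :=
  measurableSet_Ioc.union measurableSet_Ioc

theorem volume_wrappedIoc (hcT : c ≤ T) (hx : x ∈ Icc 0 T) :
    volume (wrappedIoc T x c) = ENNReal.ofReal c := by
  rw [wrappedIoc, measure_union (disjoint_wrappedIoc hcT) measurableSet_Ioc, Real.volume_Ioc,
    Real.volume_Ioc]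
  rcases le_total (x + c) T with hle | hlt
  · rw [min_eq_left hle, sub_zero,
      ENNReal.ofReal_of_nonpos (show x + c - T ≤ 0 by linarith), add_zero,
      add_sub_cancel_left]
  · rw [min_eq_right hlt, ← ENNReal.ofReal_add (by linarith [hx.2]) (by linarith)]
    congr 1
    ring

theorem setIntegral_wrappedIoc {φ : ℝ → ℝ} (hφ : IntegrableOn φ (Icc 0 T)) (hc₀ : 0 ≤ c)
    (hcT : c ≤ T) (hx : x ∈ Icc 0 T) :
    ∫ t in wrappedIoc T x c, φ t = wrappedIncrement (fun s => ∫ t in 0..s, φ t) T c x := by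
  have hsub := wrappedIoc_subset_Icc hcT hx
  have hφ' : ∀ b ∈ Icc 0 T, IntervalIntegrable φ volume 0 b := fun b hb =>
    (intervalIntegrable_iff_integrableOn_Icc_of_le hb.1).mpr
      (hφ.mono_set (Icc_subset_Icc_right hb.2))
  have hxm : x ≤ min (x + c) T := le_min (by linarith) hx.2
  rw [wrappedIoc, setIntegral_union (disjoint_wrappedIoc hcT) measurableSet_Ioc
      (hφ.mono_set (subset_union_left.trans hsub)) (hφ.mono_set (subset_union_right.trans hsub)),
    ← intervalIntegral.integral_of_le hxm, ← intervalIntegral.integral_interval_sub_left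
      (hφ' _ ⟨hx.1.trans hxm, min_le_right _ _⟩) (hφ' x hx), wrappedIncrement]
  congr 1
  rcases le_total (x + c - T) 0 with hle | hlt
  · rw [Ioc_eq_empty hle.not_gt, max_eq_right hle, Measure.restrict_empty, integral_zero_measure,
      intervalIntegral.integral_same]
  · rw [max_eq_left hlt, intervalIntegral.integral_of_le hlt]

end Arc

/-- Spike-variation set: for an integrable `φ` on `[0,T]` and `θ ∈ [0,1]`, there exists a
measurable `E ⊆ [0,T]` of Lebesgue measure `θ·T` with `∫_E φ = θ·∫_0^T φ`. -/
theorem exists_spike_variation_set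
    (T : ℝ) (hT : 0 < T) (φ : ℝ → ℝ)
    (hφ : IntegrableOn φ (Set.Icc 0 T) volume)
    (θ : ℝ) (hθ : θ ∈ Set.Icc (0 : ℝ) 1) :
    ∃ E : Set ℝ, E ⊆ Set.Icc 0 T ∧ MeasurableSet E ∧
      volume E = ENNReal.ofReal (θ * T) ∧
      ∫ t in E, φ t = θ * ∫ t in Set.Icc 0 T, φ t := by
  have hc₀ : 0 ≤ θ * T := mul_nonneg hθ.1 hT.le
  have hcT : θ * T ≤ T := mul_le_of_le_one_left hT.le hθ.2
  have hF : ContinuousOn (fun s => ∫ t in 0..s, φ t) (Icc 0 T) := by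
    rw [← uIcc_of_le hT.le] at hφ ⊢
    exact intervalIntegral.continuousOn_primitive_interval hφ
  obtain ⟨x, hx, hgx⟩ :=
    exists_wrappedIncrement_eq hT intervalIntegral.integral_same hF hc₀ hcT
  refine ⟨wrappedIoc T x (θ * T), wrappedIoc_subset_Icc hcT hx, measurableSet_wrappedIoc,
    volume_wrappedIoc hcT hx, ?_⟩
  rw [setIntegral_wrappedIoc hφ hc₀ hcT hx, hgx, mul_div_cancel_right₀ θ hT.ne',
    intervalIntegral.integral_of_le hT.le, integral_Icc_eq_integral_Ioc]
end

section
/- Let T > 0, let k be a positive integer, and let φ_1, …, φ_k : [0,T] → ℝ be Lebesgue integrable functions. Then for every θ ∈ [0,1] there exists a Lebesgue-measurable set E ⊆ [0,T] with Lebesgue measure equal to θ·T such that ∫_E φ_i(t) dt = θ · ∫_0^T φ_i(t) dt for every i = 1, …, k. -/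
/-!
Induction on the number of functions, for the vector measure `ν = (μ, ∫ g₁, …, ∫ gₙ)`.
If every measurable set can be halved for `ν`, iterating the halvings dyadically and passing to
the limit gives a monotone chain `F : [0, 1] → Set α` from `∅` to `A` with `ν (F t) = t • ν A`.
Conversely, such a chain for `(μ, ∫ g₁, …, ∫ gₙ)` halves any `S` for one more function `g₀`:
every window `F (t + 1/2) \ F t` halves the old components, `t ↦ ∫_{F (t + 1/2) \ F t} g₀` is
continuous because `μ (F t)` is, and its values at `t = 0` and `t = 1/2` add up to `∫_S g₀`,
so one window halves `∫_S g₀` too. Halving the measure alone on `ℝ` is the intermediate value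
theorem for `x ↦ μ (A ∩ Iic x)`, which is continuous when `μ` has no atoms.
-/

open MeasureTheory Set Filter Topology

lemma two_mul_floor_le_floor_mul_two_pow_succ {t : ℝ} (ht : 0 ≤ t) (m : ℕ) :
    2 * ⌊t * 2 ^ m⌋₊ ≤ ⌊t * 2 ^ (m + 1)⌋₊ := by
  rw [Nat.le_floor_iff (by positivity), pow_succ]
  push_cast
  nlinarith [Nat.floor_le (by positivity : 0 ≤ t * 2 ^ m)]

lemma floor_mul_two_pow_le {t : ℝ} (ht : t ≤ 1) (m : ℕ) : ⌊t * 2 ^ m⌋₊ ≤ 2 ^ m :=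
  Nat.floor_le_of_le (by push_cast; nlinarith [pow_pos (two_pos (α := ℝ)) m])

lemma tendsto_floor_mul_two_pow_div {t : ℝ} (ht : 0 ≤ t) :
    Tendsto (fun m : ℕ ↦ (⌊t * 2 ^ m⌋₊ : ℝ) / 2 ^ m) atTop (𝓝 t) :=
  (tendsto_nat_floor_mul_div_atTop ht).comp (tendsto_pow_atTop_atTop_of_one_lt one_lt_two)

section dyadicChain

variable {α : Type*} {half : Set α → Set α} {A : Set α}

/-- `dyadicChain half A m i` stands for the part of `A` below the dyadic point `i / 2 ^ m`:
level `m + 1` inserts, between consecutive sets of level `m`, `half` of their difference. -/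
def dyadicChain (half : Set α → Set α) (A : Set α) : ℕ → ℕ → Set α
  | 0, i => if i = 0 then ∅ else A
  | m + 1, i => if i % 2 = 0 then dyadicChain half A m (i / 2)
      else dyadicChain half A m (i / 2) ∪
        half (dyadicChain half A m (i / 2 + 1) \ dyadicChain half A m (i / 2))

lemma dyadicChain_zero_of_ne_zero {i : ℕ} (hi : i ≠ 0) : dyadicChain half A 0 i = A := if_neg hi

@[simp]
lemma dyadicChain_succ_two_mul (m j : ℕ) :
    dyadicChain half A (m + 1) (2 * j) = dyadicChain half A m j := by
  simp [dyadicChain]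

@[simp]
lemma dyadicChain_succ_two_mul_add_one (m j : ℕ) :
    dyadicChain half A (m + 1) (2 * j + 1) = dyadicChain half A m j ∪
      half (dyadicChain half A m (j + 1) \ dyadicChain half A m j) := by
  have hj : (2 * j + 1) / 2 = j := by omega
  simp [dyadicChain, hj]

@[simp]
lemma dyadicChain_zero (m : ℕ) : dyadicChain half A m 0 = ∅ := by
  induction m with
  | zero => rfl
  | succ m ih => simpa using dyadicChain_succ_two_mul (half := half) (A := A) m 0 ▸ ih

@[simp]
lemma dyadicChain_two_pow (m : ℕ) : dyadicChain half A m (2 ^ m) = A := by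
  induction m with
  | zero => exact dyadicChain_zero_of_ne_zero one_ne_zero
  | succ m ih => rw [pow_succ', dyadicChain_succ_two_mul, ih]

variable [MeasurableSpace α]

lemma measurableSet_dyadicChain
    (hhalf : ∀ S, MeasurableSet S → half S ⊆ S ∧ MeasurableSet (half S))
    (hA : MeasurableSet A) (m i : ℕ) : MeasurableSet (dyadicChain half A m i) := by
  induction m generalizing i with
  | zero => rcases eq_or_ne i 0 with rfl | hi <;> simp [dyadicChain_zero_of_ne_zero, *]
  | succ m ih =>
    obtain ⟨j, rfl | rfl⟩ := Nat.even_or_odd' i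
    · simpa using ih j
    · simpa using (ih j).union (hhalf _ ((ih _).diff (ih _))).2

lemma dyadicChain_subset_succ
    (hhalf : ∀ S, MeasurableSet S → half S ⊆ S ∧ MeasurableSet (half S))
    (hA : MeasurableSet A) (m i : ℕ) :
    dyadicChain half A m i ⊆ dyadicChain half A m (i + 1) := by
  induction m generalizing i with
  | zero => rcases eq_or_ne i 0 with rfl | hi <;> simp [dyadicChain_zero_of_ne_zero, *]
  | succ m ih =>
    obtain ⟨j, rfl | rfl⟩ := Nat.even_or_odd' i
    · simp
    · have hmeas := measurableSet_dyadicChain hhalf hA m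
      rw [show 2 * j + 1 + 1 = 2 * (j + 1) by ring]
      simpa using ⟨ih j, (hhalf _ ((hmeas _).diff (hmeas _))).1.trans sdiff_subset⟩

lemma monotone_dyadicChain
    (hhalf : ∀ S, MeasurableSet S → half S ⊆ S ∧ MeasurableSet (half S))
    (hA : MeasurableSet A) (m : ℕ) : Monotone (dyadicChain half A m) :=
  monotone_nat_of_le_succ (dyadicChain_subset_succ hhalf hA m)

end dyadicChain

namespace MeasureTheory.VectorMeasure

variable {α M : Type*} [MeasurableSpace α] [AddCommGroup M] [Module ℝ M] [TopologicalSpace M]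
  {ν : VectorMeasure α M} {half : Set α → Set α} {A : Set α}

def IsFractionalPart (ν : VectorMeasure α M) (θ : ℝ) (A B : Set α) : Prop :=
  B ⊆ A ∧ MeasurableSet B ∧ ν B = θ • ν A

def IsFractionalChain (ν : VectorMeasure α M) (A : Set α) (F : ℝ → Set α) : Prop :=
  F 0 = ∅ ∧ F 1 = A ∧ MonotoneOn F (Icc 0 1) ∧ ∀ t ∈ Icc (0 : ℝ) 1, ν.IsFractionalPart t A (F t)

lemma apply_dyadicChain [T2Space M]
    (hhalf : ∀ S, MeasurableSet S → ν.IsFractionalPart 2⁻¹ S (half S)) (hA : MeasurableSet A)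
    {m i : ℕ} (hi : i ≤ 2 ^ m) : ν (dyadicChain half A m i) = ((i : ℝ) / 2 ^ m) • ν A := by
  have hhalf' S hS : half S ⊆ S ∧ MeasurableSet (half S) := ⟨(hhalf S hS).1, (hhalf S hS).2.1⟩
  have hmeas := measurableSet_dyadicChain hhalf' hA
  induction m generalizing i with
  | zero =>
    interval_cases i
    · simp
    · simp [dyadicChain_zero_of_ne_zero]
  | succ m ih =>
    obtain ⟨j, rfl | rfl⟩ := Nat.even_or_odd' i
    · rw [dyadicChain_succ_two_mul, ih (by omega)]
      push_cast
      rw [pow_succ]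
      module
    · obtain ⟨hsub, hhm, hval⟩ := hhalf _ ((hmeas m (j + 1)).diff (hmeas m j))
      have hdisj : Disjoint (dyadicChain half A m j) (half _) :=
        disjoint_sdiff_right.mono_right hsub
      rw [dyadicChain_succ_two_mul_add_one, of_union hdisj (hmeas m j) hhm, hval,
        of_sdiff (hmeas m j) (hmeas m (j + 1)) (monotone_dyadicChain hhalf' hA m (Nat.le_succ j)),
        ih (by omega), ih (by omega)]
      push_cast
      rw [pow_succ]
      module

theorem exists_chain_of_halving [T2Space M] [ContinuousSMul ℝ M]
    (H : ∀ S, MeasurableSet S → ∃ B, ν.IsFractionalPart 2⁻¹ S B) (hA : MeasurableSet A) :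
    ∃ F, ν.IsFractionalChain A F := by
  choose! half hhalf using H
  have hhalf' S hS : half S ⊆ S ∧ MeasurableSet (half S) := ⟨(hhalf S hS).1, (hhalf S hS).2.1⟩
  have hmono := monotone_dyadicChain hhalf' hA
  have hmeas := measurableSet_dyadicChain hhalf' hA
  let D : ℝ → ℕ → Set α := fun t m ↦ dyadicChain half A m ⌊t * 2 ^ m⌋₊
  refine ⟨fun t ↦ ⋃ m, D t m, by simp [D], ?_, ?_, fun t ht ↦ ⟨?_, ?_, ?_⟩⟩
  · have h2 (m : ℕ) : ⌊(2 : ℝ) ^ m⌋₊ = 2 ^ m := by exact_mod_cast Nat.floor_natCast (2 ^ m)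
    simp [D, h2, iUnion_const]
  · intro s hs t ht hst
    exact iUnion_mono fun m ↦ hmono m (Nat.floor_mono (by gcongr))
  · exact iUnion_subset fun m ↦ (hmono m (floor_mul_two_pow_le ht.2 m)).trans
      (dyadicChain_two_pow m).subset
  · exact .iUnion fun m ↦ hmeas m _
  · have hDmono : Monotone (D t) := monotone_nat_of_le_succ fun m ↦
      (dyadicChain_succ_two_mul (half := half) (A := A) m _).symm.subset.trans
        (hmono (m + 1) (two_mul_floor_le_floor_mul_two_pow_succ ht.1 m))
    refine tendsto_nhds_unique
      (tendsto_vectorMeasure_iUnion_atTop_nat hDmono fun m ↦ hmeas m _) ?_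
    simp only [D, apply_dyadicChain hhalf hA (floor_mul_two_pow_le ht.2 _)]
    exact (tendsto_floor_mul_two_pow_div ht.1).smul_const _

lemma IsFractionalPart.sdiff [T2Space M] {s t : ℝ} {B C : Set α}
    (hB : ν.IsFractionalPart s A B) (hC : ν.IsFractionalPart t A C) (hBC : B ⊆ C) :
    ν.IsFractionalPart (t - s) A (C \ B) :=
  ⟨sdiff_subset.trans hC.1, hC.2.1.diff hB.2.1, by
    rw [of_sdiff hB.2.1 hC.2.1 hBC, hB.2.2, hC.2.2, sub_smul]⟩

end MeasureTheory.VectorMeasure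

namespace MeasureTheory

variable {α E : Type*} [MeasurableSpace α] [NormedAddCommGroup E] [NormedSpace ℝ E]
  {μ : Measure α}

lemma measureReal_sdiff_le_abs_sub [IsFiniteMeasure μ] {B C : Set α} (hC : MeasurableSet C)
    (hBC : B ⊆ C ∨ C ⊆ B) :
    μ.real (B \ C) ≤ |μ.real B - μ.real C| := by
  rcases hBC with hBC | hCB
  · simp [sdiff_eq_empty.mpr hBC]
  · rw [measureReal_sdiff hCB hC]
    exact le_abs_self _

lemma setIntegral_eq_add_sdiff_sub_sdiff {f : α → E} (hf : Integrable f μ) {B C : Set α}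
    (hB : MeasurableSet B) (hC : MeasurableSet C) :
    ∫ x in B, f x ∂μ = ∫ x in C, f x ∂μ + ∫ x in B \ C, f x ∂μ - ∫ x in C \ B, f x ∂μ := by
  rw [← integral_inter_add_sdiff hC hf.integrableOn (s := B),
    ← integral_inter_add_sdiff hB hf.integrableOn (s := C), inter_comm]
  abel

theorem continuousOn_setIntegral_of_monotoneOn [IsFiniteMeasure μ] {f : α → E}
    (hf : Integrable f μ) {s : Set ℝ} {F : ℝ → Set α} (hF : MonotoneOn F s)
    (hFm : ∀ t ∈ s, MeasurableSet (F t))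
    (hμF : ContinuousOn (fun t ↦ μ.real (F t)) s) :
    ContinuousOn (fun t ↦ ∫ x in F t, f x ∂μ) s := by
  intro t₀ ht₀
  have hcomp : ∀ t ∈ s, F t ⊆ F t₀ ∨ F t₀ ⊆ F t := fun t ht ↦
    (le_total t t₀).imp (hF ht ht₀) (hF ht₀ ht)
  have hgap : Tendsto (fun t ↦ |μ.real (F t) - μ.real (F t₀)|) (𝓝[s] t₀) (𝓝 0) := by
    simpa using ((hμF t₀ ht₀).sub_const (μ.real (F t₀))).abs
  have hsmall {B : ℝ → Set α} (hB : ∀ t ∈ s, μ.real (B t) ≤ |μ.real (F t) - μ.real (F t₀)|) :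
      Tendsto (fun t ↦ ∫ x in B t, f x ∂μ) (𝓝[s] t₀) (𝓝 0) := by
    refine hf.tendsto_setIntegral_nhds_zero ?_
    have : Tendsto (fun t ↦ μ.real (B t)) (𝓝[s] t₀) (𝓝 0) :=
      tendsto_of_tendsto_of_tendsto_of_le_of_le' tendsto_const_nhds hgap
        (.of_forall fun _ ↦ measureReal_nonneg) (eventually_nhdsWithin_of_forall hB)
    simpa [Function.comp_def, ofReal_measureReal] using ENNReal.tendsto_ofReal this
  have hlim := (tendsto_const_nhds (x := ∫ x in F t₀, f x ∂μ)).add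
    (hsmall (B := fun t ↦ F t \ F t₀) fun t ht ↦
      measureReal_sdiff_le_abs_sub (hFm t₀ ht₀) (hcomp t ht)) |>.sub
    (hsmall (B := fun t ↦ F t₀ \ F t) fun t ht ↦ abs_sub_comm (μ.real (F t)) _ ▸
      measureReal_sdiff_le_abs_sub (hFm t ht) (hcomp t ht).symm)
  rw [add_zero, sub_zero] at hlim
  refine hlim.congr' (eventually_nhdsWithin_of_forall fun t ht ↦ ?_)
  exact (setIntegral_eq_add_sdiff_sub_sdiff hf (hFm t ht) (hFm t₀ ht₀)).symm

section measureWithIntegrals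

variable {α ι : Type*} [MeasurableSpace α] [Fintype ι] {μ : Measure α} {g : ι → α → ℝ}

noncomputable def measureWithIntegrals (μ : Measure α) (g : ι → α → ℝ) :
    VectorMeasure α (ℝ × (ι → ℝ)) :=
  μ.withDensityᵥ fun x ↦ ((1 : ℝ), fun i ↦ g i x)

lemma measureWithIntegrals_apply [IsFiniteMeasure μ] (hg : ∀ i, Integrable (g i) μ) {B : Set α}
    (hB : MeasurableSet B) :
    measureWithIntegrals μ g B = (μ.real B, fun i ↦ ∫ x in B, g i x ∂μ) := by
  have hgB : ∀ i, Integrable (g i) (μ.restrict B) := fun i ↦ (hg i).integrableOn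
  rw [measureWithIntegrals, withDensityᵥ_apply
      ((integrable_const 1).prodMk (integrable_pi_iff.2 hg)) hB,
    integral_pair (integrable_const 1) (integrable_pi_iff.2 hgB)]
  ext i
  · simp
  · exact eval_integral hgB i

lemma isFractionalPart_measureWithIntegrals_iff [IsFiniteMeasure μ]
    (hg : ∀ i, Integrable (g i) μ) {θ : ℝ} {A B : Set α} (hA : MeasurableSet A) :
    (measureWithIntegrals μ g).IsFractionalPart θ A B ↔ B ⊆ A ∧ MeasurableSet B ∧
      μ.real B = θ * μ.real A ∧ ∀ i, ∫ x in B, g i x ∂μ = θ * ∫ x in A, g i x ∂μ := by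
  refine and_congr_right fun _ ↦ ⟨fun ⟨hB, h⟩ ↦ ⟨hB, ?_⟩, fun ⟨hB, h⟩ ↦ ⟨hB, ?_⟩⟩
  · rw [measureWithIntegrals_apply hg hB, measureWithIntegrals_apply hg hA] at h
    simpa [Prod.ext_iff, funext_iff] using h
  · rw [measureWithIntegrals_apply hg hB, measureWithIntegrals_apply hg hA]
    simpa [Prod.ext_iff, funext_iff] using h

theorem exists_half_of_chain [IsFiniteMeasure μ] {n : ℕ} {g : Fin (n + 1) → α → ℝ}
    (hg : ∀ i, Integrable (g i) μ) {S : Set α} (hS : MeasurableSet S) {F : ℝ → Set α}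
    (hchain : (measureWithIntegrals μ (Fin.tail g)).IsFractionalChain S F) :
    ∃ B, (measureWithIntegrals μ g).IsFractionalPart 2⁻¹ S B := by
  obtain ⟨hF0, hF1, hF, hFS⟩ := hchain
  have hFS' t ht := (isFractionalPart_measureWithIntegrals_iff (g := Fin.tail g)
    (fun i ↦ hg i.succ) hS).1 (hFS t ht)
  set G : ℝ → ℝ := fun t ↦ ∫ x in F t, g 0 x ∂μ
  have hG : ContinuousOn G (Icc 0 1) :=
    continuousOn_setIntegral_of_monotoneOn (hg 0) hF (fun t ht ↦ (hFS' t ht).2.1)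
      ((continuousOn_id.mul continuousOn_const).congr fun t ht ↦ (hFS' t ht).2.2.1)
  set H : ℝ → ℝ := fun t ↦ G (t + 2⁻¹) - G t
  have hH : ContinuousOn H (Icc 0 2⁻¹) := by
    refine (hG.comp (continuous_add_const 2⁻¹).continuousOn fun t ht ↦ ?_).sub
      (hG.mono (Icc_subset_Icc_right (by norm_num)))
    exact ⟨by linarith [ht.1], by linarith [ht.2]⟩
  have hHsum : H 0 + H 2⁻¹ = ∫ x in S, g 0 x ∂μ := by
    norm_num [H, G, hF0, hF1]
  obtain ⟨t, ⟨ht0, ht1⟩, hHt⟩ : ∃ t ∈ Icc (0 : ℝ) 2⁻¹, H t = 2⁻¹ * ∫ x in S, g 0 x ∂μ := by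
    have hmid : 2⁻¹ * ∫ x in S, g 0 x ∂μ ∈ uIcc (H 0) (H 2⁻¹) := by
      rcases le_total (H 0) (H 2⁻¹) with h | h
      · exact mem_uIcc.2 (.inl ⟨by linarith, by linarith⟩)
      · exact mem_uIcc.2 (.inr ⟨by linarith, by linarith⟩)
    rw [← uIcc_of_le (by norm_num : (0 : ℝ) ≤ 2⁻¹)] at hH ⊢
    exact intermediate_value_uIcc hH hmid
  have hlo : t ∈ Icc (0 : ℝ) 1 := ⟨ht0, by linarith⟩
  have hhi : t + 2⁻¹ ∈ Icc (0 : ℝ) 1 := ⟨by linarith, by linarith⟩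
  have hwin := (hFS t hlo).sdiff (hFS _ hhi) (hF hlo hhi (by linarith))
  rw [add_sub_cancel_left,
    isFractionalPart_measureWithIntegrals_iff (g := Fin.tail g) (fun i ↦ hg i.succ) hS] at hwin
  refine ⟨F (t + 2⁻¹) \ F t, (isFractionalPart_measureWithIntegrals_iff hg hS).2
    ⟨hwin.1, hwin.2.1, hwin.2.2.1, Fin.cases ?_ hwin.2.2.2⟩⟩
  rw [setIntegral_sdiff (hFS' t hlo).2.1 (hg 0).integrableOn (hF hlo hhi (by linarith))]
  exact hHt

theorem exists_chain_measureWithIntegrals [IsFiniteMeasure μ]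
    (hμ : ∀ S, MeasurableSet S → ∃ B ⊆ S, MeasurableSet B ∧ μ.real B = 2⁻¹ * μ.real S)
    {n : ℕ} {g : Fin n → α → ℝ} (hg : ∀ i, Integrable (g i) μ) {A : Set α}
    (hA : MeasurableSet A) : ∃ F, (measureWithIntegrals μ g).IsFractionalChain A F := by
  induction n generalizing A with
  | zero =>
    refine VectorMeasure.exists_chain_of_halving (fun S hS ↦ ?_) hA
    obtain ⟨B, hBS, hB, hμB⟩ := hμ S hS
    exact ⟨B, (isFractionalPart_measureWithIntegrals_iff hg hS).2 ⟨hBS, hB, hμB, finZeroElim⟩⟩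
  | succ n ih =>
    refine VectorMeasure.exists_chain_of_halving (fun S hS ↦ ?_) hA
    obtain ⟨F, hF⟩ := ih (g := Fin.tail g) (fun i ↦ hg i.succ) hS
    exact exists_half_of_chain hg hS hF

end measureWithIntegrals

section Real

variable {μ : Measure ℝ} [IsFiniteMeasure μ]

lemma continuous_measureReal_Iic [NullSingletonClass μ] : Continuous fun x ↦ μ.real (Iic x) := by
  have h (x : ℝ) : μ.real (Iic x) = μ.real (Iic 0) + ∫ _ in (0 : ℝ)..x, (1 : ℝ) ∂μ := by
    rw [← intervalIntegral.integral_Iic_sub_Iic (integrable_const 1).integrableOn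
      (integrable_const 1).integrableOn]
    simp only [setIntegral_const, smul_eq_mul, mul_one]
    ring
  rw [funext h]
  exact continuous_const.add ((integrable_const (1 : ℝ)).continuous_primitive 0)

lemma tendsto_measureReal_Iic_atTop :
    Tendsto (fun x ↦ μ.real (Iic x)) atTop (𝓝 (μ.real univ)) :=
  (ENNReal.tendsto_toReal (measure_ne_top μ univ)).comp (tendsto_measure_Iic_atTop μ)

lemma tendsto_measureReal_Iic_atBot : Tendsto (fun x ↦ μ.real (Iic x)) atBot (𝓝 0) := by
  have h := tendsto_measure_iInter_atBot (μ := μ) (fun x ↦ measurableSet_Iic.nullMeasurableSet)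
    (fun _ _ ↦ Iic_subset_Iic.2) ⟨0, measure_ne_top μ _⟩
  rw [iInter_eq_empty_iff.2 fun x ↦ ⟨x - 1, by simp⟩, measure_empty] at h
  exact (ENNReal.tendsto_toReal ENNReal.zero_ne_top).comp h

lemma exists_measureReal_Iic_eq [NullSingletonClass μ] {c : ℝ} (hc : c ∈ Ioo 0 (μ.real univ)) :
    ∃ x, μ.real (Iic x) = c :=
  mem_range_of_exists_le_of_exists_ge continuous_measureReal_Iic
    ((tendsto_measureReal_Iic_atBot.eventually (eventually_le_nhds hc.1)).exists)
    ((tendsto_measureReal_Iic_atTop.eventually (eventually_ge_nhds hc.2)).exists)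

lemma exists_measureReal_eq_half [NullSingletonClass μ] {S : Set ℝ} (hS : MeasurableSet S) :
    ∃ B ⊆ S, MeasurableSet B ∧ μ.real B = 2⁻¹ * μ.real S := by
  rcases (measureReal_nonneg (μ := μ) (s := S)).eq_or_lt with h0 | hpos
  · exact ⟨∅, empty_subset S, .empty, by simp [← h0]⟩
  obtain ⟨x, hx⟩ := exists_measureReal_Iic_eq (μ := μ.restrict S) (c := 2⁻¹ * μ.real S)
    (by simp; constructor <;> linarith)
  refine ⟨S ∩ Iic x, inter_subset_left, hS.inter measurableSet_Iic, ?_⟩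
  rwa [measureReal_restrict_apply measurableSet_Iic, inter_comm] at hx

end Real

theorem exists_isFractionalPart_measureWithIntegrals (μ : Measure ℝ) [IsFiniteMeasure μ]
    [NullSingletonClass μ] {n : ℕ} {g : Fin n → ℝ → ℝ} (hg : ∀ i, Integrable (g i) μ)
    {A : Set ℝ} (hA : MeasurableSet A) {θ : ℝ} (hθ : θ ∈ Icc (0 : ℝ) 1) :
    ∃ B, (measureWithIntegrals μ g).IsFractionalPart θ A B :=
  let ⟨F, _, _, _, hF⟩ :=
    exists_chain_measureWithIntegrals (fun _ hS ↦ exists_measureReal_eq_half hS) hg hA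
  ⟨F θ, hF θ hθ⟩

end MeasureTheory

theorem exists_spike_variation_set_vector_general
    (T : ℝ) (hT : 0 < T) (k : ℕ) (φ : Fin k → ℝ → ℝ)
    (hφ : ∀ i, IntegrableOn (φ i) (Set.Icc 0 T) volume)
    (θ : ℝ) (hθ : θ ∈ Set.Icc (0 : ℝ) 1) :
    ∃ E : Set ℝ, E ⊆ Set.Icc 0 T ∧ MeasurableSet E ∧
      volume E = ENNReal.ofReal (θ * T) ∧
      ∀ i, ∫ t in E, φ i t = θ * ∫ t in Set.Icc 0 T, φ i t := by
  have : Fact (volume (Icc (0 : ℝ) T) < ⊤) := ⟨measure_Icc_lt_top⟩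
  obtain ⟨E, hE⟩ :=
    exists_isFractionalPart_measureWithIntegrals _ hφ measurableSet_Icc hθ
  obtain ⟨hET, hEm, hμE, hint⟩ :=
    (isFractionalPart_measureWithIntegrals_iff hφ measurableSet_Icc).1 hE
  refine ⟨E, hET, hEm, ?_, fun i ↦ ?_⟩
  · rw [measureReal_restrict_apply hEm, inter_eq_left.2 hET, measureReal_restrict_apply_self,
      Real.volume_real_Icc_of_le hT.le, sub_zero] at hμE
    rw [← hμE, ofReal_measureReal ((measure_mono hET).trans_lt measure_Icc_lt_top).ne]
  · simpa only [Measure.restrict_restrict_of_subset hET, Measure.restrict_restrict_of_subset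
      (subset_refl (Icc (0 : ℝ) T))] using hint i

/-- Vector-valued spike-variation set: for finitely many integrable functions `φ 1, …, φ k`
on `[0,T]` and `θ ∈ [0,1]`, there exists a measurable `E ⊆ [0,T]` of Lebesgue measure `θ·T`
with `∫_E φ i = θ·∫_0^T φ i` for every `i`. -/
theorem exists_spike_variation_set_vector
    (T : ℝ) (hT : 0 < T) (k : ℕ) (hk : 0 < k) (φ : Fin k → ℝ → ℝ)
    (hφ : ∀ i, IntegrableOn (φ i) (Set.Icc 0 T) volume)
    (θ : ℝ) (hθ : θ ∈ Set.Icc (0 : ℝ) 1) :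
    ∃ E : Set ℝ, E ⊆ Set.Icc 0 T ∧ MeasurableSet E ∧
      volume E = ENNReal.ofReal (θ * T) ∧
      ∀ i, ∫ t in E, φ i t = θ * ∫ t in Set.Icc 0 T, φ i t :=
  exists_spike_variation_set_vector_general T hT k φ hφ θ hθ
end

section
/- Let α ≥ 0 and β ≥ 0 with α + β > 0, let f, g : [0,1] → ℝ be bounded Lebesgue-measurable functions, and let K : [0,1] × [0,1] → ℝ be continuous. Then for Lebesgue-almost every t ∈ (0,1), we have lim_{r→0+} (1/r²) ∫_{t−rβ}^{t+rα} ∫_{t−rβ}^{u} f(u) K(u,s) g(s) ds du = ((α+β)²/2) · f(t) K(t,t) g(t). -/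
/-!
Extend `f` and `g` by zero and `K` through the projection onto `[0, 1]`, and take `t` a common
Lebesgue point of the extended `f` and `g`. On the box `[a, b]²`, `a = t - rβ`, `b = t + rα`,
split `f(u) K(u,s) g(s) - f(t) K(t,t) g(t)` telescopically into terms controlled by
`|f(u) - f(t)|`, by the oscillation of `K` near `(t, t)` and by `|g(s) - g(t)|`. Integrated over
the triangle `a ≤ s ≤ u ≤ b`, whose sides have length `(α + β) r`, the first and last terms are
`(α + β) r · o(r)` by the Lebesgue point property and the middle one is `o(r²)` by continuity,
while the constant `f(t) K(t,t) g(t)` integrates to `((α + β) r)² / 2` times itself.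
-/

open MeasureTheory Filter Set Topology Function

theorem abs_mul_mul_sub_mul_mul_le (x y z x₀ y₀ z₀ : ℝ) :
    |x * y * z - x₀ * y₀ * z₀|
      ≤ |y * z| * |x - x₀| + |x₀| * |z| * |y - y₀| + |x₀ * y₀| * |z - z₀| := by
  have h : x * y * z - x₀ * y₀ * z₀
      = (x - x₀) * (y * z) + x₀ * (y - y₀) * z + x₀ * y₀ * (z - z₀) := by ring
  rw [h]
  refine (abs_add_le _ _).trans (add_le_add ((abs_add_le _ _).trans (le_of_eq ?_)) ?_)
  · simp only [abs_mul]; ring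
  · rw [abs_mul, mul_comm]

theorem tendsto_of_forall_eventually_dist_le {ι X : Type*} [PseudoMetricSpace X]
    {l : Filter ι} {u : ι → X} {a : X} (C : ℝ) (h : ∀ ε > 0, ∀ᶠ i in l, dist (u i) a ≤ C * ε) :
    Tendsto u l (𝓝 a) := by
  refine Metric.tendsto_nhds.2 fun ε hε => ?_
  have hC : 0 < |C| + 1 := by positivity
  filter_upwards [h (ε / (|C| + 1)) (div_pos hε hC)] with i hi
  calc dist (u i) a ≤ C * (ε / (|C| + 1)) := hi
    _ ≤ |C| * (ε / (|C| + 1)) := by gcongr; exact le_abs_self C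
    _ < ε := by rw [mul_div_assoc', div_lt_iff₀ hC]; nlinarith

theorem abs_setIntegral_sub_setIntegral_le {α : Type*} [MeasurableSpace α] {μ : Measure α}
    {s : Set α} (hs : MeasurableSet s) {φ ψ B : α → ℝ}
    (hφ : AEStronglyMeasurable φ (μ.restrict s)) (hψ : IntegrableOn ψ s μ)
    (hB : IntegrableOn B s μ) (h : ∀ x ∈ s, |φ x - ψ x| ≤ B x) :
    |∫ x in s, φ x ∂μ - ∫ x in s, ψ x ∂μ| ≤ ∫ x in s, B x ∂μ := by
  have hle : ∀ᵐ x ∂μ.restrict s, ‖φ x - ψ x‖ ≤ B x := (ae_restrict_iff' hs).2 (ae_of_all _ h)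
  have hφi : IntegrableOn φ s μ := by
    refine (hψ.norm.add hB).mono' hφ ?_
    filter_upwards [hle] with x hx
    calc ‖φ x‖ ≤ ‖ψ x‖ + ‖φ x - ψ x‖ := norm_le_insert' _ _
      _ ≤ ‖ψ x‖ + B x := by gcongr
  rw [← integral_sub hφi hψ]
  exact norm_integral_le_of_norm_le hB hle

theorem measurable_setIntegral_Icc {G : ℝ → ℝ → ℝ} (hG : Measurable (uncurry G))
    (ν : Measure ℝ) [SFinite ν] (a : ℝ) :
    Measurable fun u => ∫ s in Icc a u, G u s ∂ν := by
  have hS : MeasurableSet {p : ℝ × ℝ | a ≤ p.2 ∧ p.2 ≤ p.1} :=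
    (measurableSet_le measurable_const measurable_snd).inter
      (measurableSet_le measurable_snd measurable_fst)
  have h := ((hG.indicator hS).stronglyMeasurable.integral_prod_right' (ν := ν)).measurable
  convert h using 2 with u
  rw [← integral_indicator measurableSet_Icc]
  rfl

theorem setIntegral_Icc_sub_left {a b : ℝ} (hab : a ≤ b) :
    ∫ u in Icc a b, (u - a) = (b - a) ^ 2 / 2 := by
  rw [integral_Icc_eq_integral_Ioc, ← intervalIntegral.integral_of_le hab,
    intervalIntegral.integral_comp_sub_right (fun x => x), sub_self, integral_id]
  ring

theorem abs_setIntegral_triangle_sub_le {G : ℝ → ℝ → ℝ} (hG : Measurable (uncurry G))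
    {a b L e : ℝ} {p q : ℝ → ℝ} (hab : a ≤ b) (hp : IntegrableOn p (Icc a b))
    (hq : IntegrableOn q (Icc a b)) (hp0 : ∀ u, 0 ≤ p u) (hq0 : ∀ s, 0 ≤ q s) (he : 0 ≤ e)
    (h : ∀ u ∈ Icc a b, ∀ s ∈ Icc a b, |G u s - L| ≤ p u + e + q s) :
    |(∫ u in Icc a b, ∫ s in Icc a u, G u s) - (b - a) ^ 2 / 2 * L|
      ≤ (b - a) * ((∫ u in Icc a b, p u) + ∫ s in Icc a b, q s) + (b - a) ^ 2 * e := by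
  set Q := ∫ s in Icc a b, q s
  have hconst : ∀ {c d : ℝ} (C : ℝ), IntegrableOn (fun _ => C) (Icc c d) :=
    fun C => integrableOn_const measure_Icc_lt_top.ne
  have inner : ∀ u ∈ Icc a b,
      |(∫ s in Icc a u, G u s) - (u - a) * L| ≤ (b - a) * (p u + e) + Q := by
    intro u hu
    have hsub : Icc a u ⊆ Icc a b := Icc_subset_Icc_right hu.2
    have hint := abs_setIntegral_sub_setIntegral_le (φ := G u) (ψ := fun _ => L)
      (B := fun s => (p u + e) + q s) measurableSet_Icc
      (hG.comp measurable_prodMk_left).aestronglyMeasurable (hconst L)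
      ((hconst _).add (hq.mono_set hsub)) fun s hs => h u hu s (hsub hs)
    rw [setIntegral_const, integral_add (hconst _) (hq.mono_set hsub), setIntegral_const,
      Real.volume_real_Icc_of_le hu.1, smul_eq_mul, smul_eq_mul] at hint
    calc _ ≤ (u - a) * (p u + e) + ∫ s in Icc a u, q s := hint
      _ ≤ (b - a) * (p u + e) + Q := by
        gcongr
        · exact add_nonneg (hp0 u) he
        · exact hu.2
        · exact setIntegral_mono_set hq (ae_of_all _ hq0) hsub.eventuallyLE
  have hB : IntegrableOn (fun u => (b - a) * (p u + e)) (Icc a b) :=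
    (hp.add (hconst e)).const_mul (b - a)
  have outer := abs_setIntegral_sub_setIntegral_le
    (φ := fun u => ∫ s in Icc a u, G u s) (ψ := fun u => (u - a) * L)
    (B := fun u => (b - a) * (p u + e) + Q) measurableSet_Icc
    (measurable_setIntegral_Icc hG volume a).aestronglyMeasurable
    ((continuous_id.sub continuous_const).mul continuous_const).integrableOn_Icc
    (hB.add (hconst Q)) inner
  rw [integral_mul_const, setIntegral_Icc_sub_left hab, integral_add hB (hconst Q),
    integral_const_mul, integral_add hp (hconst e), setIntegral_const, setIntegral_const,
    Real.volume_real_Icc_of_le hab, smul_eq_mul, smul_eq_mul] at outer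
  linarith

theorem setIntegral_triangle_congr {a b : ℝ} {F G : ℝ → ℝ → ℝ}
    (h : ∀ u ∈ Icc a b, ∀ s ∈ Icc a b, F u s = G u s) :
    ∫ u in Icc a b, ∫ s in Icc a u, F u s = ∫ u in Icc a b, ∫ s in Icc a u, G u s :=
  setIntegral_congr_fun measurableSet_Icc fun u hu =>
    setIntegral_congr_fun measurableSet_Icc fun s hs => h u hu s ⟨hs.1, hs.2.trans hu.2⟩

theorem ae_tendsto_inv_mul_setIntegral_Icc_norm_sub {E : Type*} [NormedAddCommGroup E]
    {φ : ℝ → E} (hφ : LocallyIntegrable φ) (α β : ℝ) :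
    ∀ᵐ t, Tendsto (fun r => r⁻¹ * ∫ u in Icc (t - r * β) (t + r * α), ‖φ u - φ t‖)
      (𝓝[>] 0) (𝓝 0) := by
  set c := |α| + |β| + 1
  have hc : 0 < c := by positivity
  have hαc : α ≤ c := by linarith [le_abs_self α, abs_nonneg β]
  have hβc : β ≤ c := by linarith [le_abs_self β, abs_nonneg α]
  have hcr : Tendsto (fun r => c * r) (𝓝[>] 0) (𝓝[>] 0) :=
    tendsto_nhdsWithin_iff.2 ⟨((continuous_const_mul c).tendsto' 0 0 (mul_zero c)).mono_left
      nhdsWithin_le_nhds, eventually_nhdsWithin_of_forall fun r hr => mul_pos hc hr⟩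
  filter_upwards [IsUnifLocDoublingMeasure.ae_tendsto_average_norm_sub (μ := volume) hφ 1]
    with t ht
  have hAvg := (ht (fun _ => t) (fun r => c * r) hcr (eventually_nhdsWithin_of_forall
    fun r hr => Metric.mem_closedBall_self (by rw [one_mul]; exact (mul_pos hc hr).le))).const_mul
    (2 * c)
  rw [mul_zero] at hAvg
  refine squeeze_zero' (eventually_nhdsWithin_of_forall fun r hr => ?_)
    (eventually_nhdsWithin_of_forall fun r hr => ?_) hAvg
  · exact mul_nonneg (inv_nonneg.2 (le_of_lt hr)) (integral_nonneg fun _ => norm_nonneg _)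
  · have hr : 0 < r := hr
    have hsub : Icc (t - r * β) (t + r * α) ⊆ Metric.closedBall t (c * r) := by
      rw [Real.closedBall_eq_Icc]
      apply Icc_subset_Icc <;> nlinarith [mul_le_mul_of_nonneg_left hαc hr.le,
        mul_le_mul_of_nonneg_left hβc hr.le]
    have hint : IntegrableOn (fun u => ‖φ u - φ t‖) (Metric.closedBall t (c * r)) :=
      ((hφ.integrableOn_isCompact (isCompact_closedBall t _)).sub
        (integrableOn_const measure_closedBall_lt_top.ne)).norm
    rw [setAverage_eq, Real.volume_real_closedBall (by positivity), smul_eq_mul]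
    calc r⁻¹ * ∫ u in Icc (t - r * β) (t + r * α), ‖φ u - φ t‖
        ≤ r⁻¹ * ∫ u in Metric.closedBall t (c * r), ‖φ u - φ t‖ := by
          refine mul_le_mul_of_nonneg_left ?_ (inv_nonneg.2 hr.le)
          exact setIntegral_mono_set hint (ae_of_all _ fun _ => norm_nonneg _) hsub.eventuallyLE
      _ = _ := by field_simp

theorem tendsto_Icc_sub_mul_add_mul_smallSets (t α β : ℝ) :
    Tendsto (fun r => Icc (t - r * β) (t + r * α)) (𝓝 0) (𝓝 t).smallSets := by
  refine Tendsto.Icc (l₁ := 𝓝 t) ?_ ?_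
  · exact (by fun_prop : Continuous fun r : ℝ => t - r * β).tendsto' 0 t (by simp)
  · exact (by fun_prop : Continuous fun r : ℝ => t + r * α).tendsto' 0 t (by simp)

theorem abs_setIntegral_triangle_mul_mul_sub_le {a b t ε Cg M : ℝ} (hab : a ≤ b) (hε : 0 ≤ ε)
    {f g : ℝ → ℝ} {K : ℝ → ℝ → ℝ} (hf : Measurable f) (hfi : IntegrableOn f (Icc a b))
    (hg : Measurable g) (hgb : ∀ x, |g x| ≤ Cg) (hK : Measurable (uncurry K))
    (hKb : ∀ u s, |K u s| ≤ M) (hKε : ∀ u ∈ Icc a b, ∀ s ∈ Icc a b, |K u s - K t t| ≤ ε) :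
    |(∫ u in Icc a b, ∫ s in Icc a u, f u * K u s * g s) - (b - a) ^ 2 / 2 * (f t * K t t * g t)|
      ≤ (b - a) * (M * Cg * (∫ u in Icc a b, ‖f u - f t‖)
          + |f t| * M * ∫ s in Icc a b, ‖g s - g t‖)
        + (b - a) ^ 2 * (|f t| * Cg * ε) := by
  have hCg : 0 ≤ Cg := (abs_nonneg _).trans (hgb 0)
  have hM : 0 ≤ M := (abs_nonneg _).trans (hKb 0 0)
  have hgi : IntegrableOn g (Icc a b) :=
    Measure.integrableOn_of_bounded measure_Icc_lt_top.ne hg.aestronglyMeasurable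
      (M := Cg) (ae_of_all _ hgb)
  have key := abs_setIntegral_triangle_sub_le (G := fun u s => f u * K u s * g s)
    (L := f t * K t t * g t) (p := fun u => M * Cg * ‖f u - f t‖)
    (q := fun s => |f t| * M * ‖g s - g t‖)
    ((hf.comp measurable_fst).mul hK |>.mul (hg.comp measurable_snd)) hab
    ((hfi.sub (integrableOn_const measure_Icc_lt_top.ne)).norm.const_mul _)
    ((hgi.sub (integrableOn_const measure_Icc_lt_top.ne)).norm.const_mul _)
    (fun _ => by positivity) (fun _ => by positivity) (by positivity : 0 ≤ |f t| * Cg * ε)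
    fun u hu s hs => by
      refine (abs_mul_mul_sub_mul_mul_le _ _ _ _ _ _).trans ?_
      simp only [Real.norm_eq_abs, abs_mul]
      gcongr
      exacts [hKb u s, hgb s, hgb s, hKε u hu s hs, hKb t t]
  rwa [integral_const_mul, integral_const_mul] at key

theorem tendsto_inv_sq_mul_setIntegral_triangle {α β t Cg M : ℝ} (hαβ : 0 ≤ α + β)
    {f g : ℝ → ℝ} {K : ℝ → ℝ → ℝ} (hf : Measurable f) (hfi : LocallyIntegrable f)
    (hg : Measurable g) (hgb : ∀ x, |g x| ≤ Cg) (hK : Continuous (uncurry K))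
    (hKb : ∀ u s, |K u s| ≤ M)
    (hft : Tendsto (fun r => r⁻¹ * ∫ u in Icc (t - r * β) (t + r * α), ‖f u - f t‖)
      (𝓝[>] 0) (𝓝 0))
    (hgt : Tendsto (fun r => r⁻¹ * ∫ u in Icc (t - r * β) (t + r * α), ‖g u - g t‖)
      (𝓝[>] 0) (𝓝 0)) :
    Tendsto (fun r => (1 / r ^ 2) * ∫ u in Icc (t - r * β) (t + r * α),
        ∫ s in Icc (t - r * β) u, f u * K u s * g s)
      (𝓝[>] 0) (𝓝 ((α + β) ^ 2 / 2 * (f t * K t t * g t))) := by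
  have hCg : 0 ≤ Cg := (abs_nonneg _).trans (hgb 0)
  have hM : 0 ≤ M := (abs_nonneg _).trans (hKb 0 0)
  refine tendsto_of_forall_eventually_dist_le
    ((α + β) * (M * Cg + |f t| * M) + (α + β) ^ 2 * (|f t| * Cg)) fun ε hε => ?_
  obtain ⟨U, hU, hKU⟩ := eventually_prod_self_iff'.1 <| (nhds_prod_eq (x := t) (y := t)) ▸
    (hK.tendsto (t, t)).eventually (Metric.closedBall_mem_nhds (K t t) hε)
  filter_upwards [self_mem_nhdsWithin,
    nhdsWithin_le_nhds ((tendsto_Icc_sub_mul_add_mul_smallSets t α β).eventually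
      (eventually_smallSets_subset.2 hU)),
    hft.eventually (eventually_le_nhds hε), hgt.eventually (eventually_le_nhds hε)]
    with r (hr : 0 < r) hrU hrf hrg
  set a := t - r * β
  set b := t + r * α
  set If := ∫ u in Icc a b, ‖f u - f t‖
  set Ig := ∫ s in Icc a b, ‖g s - g t‖
  set X := ∫ u in Icc a b, ∫ s in Icc a u, f u * K u s * g s
  have hba : b - a = (α + β) * r := by ring
  have key := abs_setIntegral_triangle_mul_mul_sub_le (by nlinarith) hε.le hf
    (hfi.integrableOn_isCompact isCompact_Icc) hg hgb hK.measurable hKb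
    fun u hu s hs => hKU u (hrU hu) s (hrU hs)
  rw [hba] at key
  have hr2 : 0 < 1 / r ^ 2 := by positivity
  calc dist (1 / r ^ 2 * X) ((α + β) ^ 2 / 2 * (f t * K t t * g t))
      = 1 / r ^ 2 * |X - ((α + β) * r) ^ 2 / 2 * (f t * K t t * g t)| := by
        rw [Real.dist_eq, ← abs_of_pos hr2, ← abs_mul, mul_sub, abs_of_pos hr2]
        congr 2
        field_simp
    _ ≤ 1 / r ^ 2 * ((α + β) * r * (M * Cg * If + |f t| * M * Ig)
          + ((α + β) * r) ^ 2 * (|f t| * Cg * ε)) := by gcongr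
    _ = (α + β) * (M * Cg * (r⁻¹ * If) + |f t| * M * (r⁻¹ * Ig))
          + (α + β) ^ 2 * (|f t| * Cg) * ε := by field_simp
    _ ≤ (α + β) * (M * Cg * ε + |f t| * M * ε) + (α + β) ^ 2 * (|f t| * Cg) * ε := by gcongr
    _ = _ := by ring

theorem abs_indicator_le {ι : Type*} {s : Set ι} {g : ι → ℝ} {C : ℝ} (hC : 0 ≤ C)
    (h : ∀ x ∈ s, |g x| ≤ C) (x : ι) : |s.indicator g x| ≤ C := by
  rw [← Real.norm_eq_abs, norm_indicator_eq_indicator_norm]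
  exact indicator_apply_le' (h x) fun _ => hC

theorem integrable_indicator_Icc_of_abs_le {a b C : ℝ} {g : ℝ → ℝ} (hg : Measurable g)
    (h : ∀ x ∈ Icc a b, |g x| ≤ C) : Integrable ((Icc a b).indicator g) :=
  (integrable_indicator_iff measurableSet_Icc).2 <|
    Measure.integrableOn_of_bounded measure_Icc_lt_top.ne hg.aestronglyMeasurable
      ((ae_restrict_iff' measurableSet_Icc).2 (ae_of_all _ h))

theorem ae_tendsto_triangle_double_integral_general
    (α β : ℝ) (hαβ : 0 < α + β)
    (f g : ℝ → ℝ) (hf : Measurable f) (hg : Measurable g)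
    (Cf : ℝ) (hfb : ∀ t ∈ Set.Icc (0 : ℝ) 1, |f t| ≤ Cf)
    (Cg : ℝ) (hgb : ∀ t ∈ Set.Icc (0 : ℝ) 1, |g t| ≤ Cg)
    (K : ℝ → ℝ → ℝ)
    (hK : ContinuousOn (fun p : ℝ × ℝ => K p.1 p.2) (Set.Icc 0 1 ×ˢ Set.Icc 0 1)) :
    ∀ᵐ t ∂(volume : Measure ℝ), t ∈ Set.Ioo (0 : ℝ) 1 →
      Tendsto
        (fun r : ℝ => (1 / r ^ 2) *
          ∫ u in Set.Icc (t - r * β) (t + r * α),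
            ∫ s in Set.Icc (t - r * β) u, f u * K u s * g s)
        (nhdsWithin 0 (Set.Ioi 0))
        (nhds (((α + β) ^ 2 / 2) * (f t * K t t * g t))) := by
  let π : ℝ → Icc (0 : ℝ) 1 := projIcc 0 1 zero_le_one
  obtain ⟨M, hM⟩ := (isCompact_Icc.prod isCompact_Icc).exists_bound_of_continuousOn hK
  have hfi := integrable_indicator_Icc_of_abs_le hf hfb
  have hgi := integrable_indicator_Icc_of_abs_le hg hgb
  filter_upwards [ae_tendsto_inv_mul_setIntegral_Icc_norm_sub hfi.locallyIntegrable α β,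
    ae_tendsto_inv_mul_setIntegral_Icc_norm_sub hgi.locallyIntegrable α β] with t hft hgt ht
  have ht' : t ∈ Icc (0 : ℝ) 1 := Ioo_subset_Icc_self ht
  have key := tendsto_inv_sq_mul_setIntegral_triangle hαβ.le (K := fun u s => K (π u) (π s))
    (hf.indicator measurableSet_Icc) hfi.locallyIntegrable (hg.indicator measurableSet_Icc)
    (abs_indicator_le ((abs_nonneg _).trans (hgb t ht')) hgb)
    (hK.comp_continuous (f := fun p : ℝ × ℝ => ((π p.1 : ℝ), (π p.2 : ℝ))) (by fun_prop)
      fun p => ⟨(π p.1).2, (π p.2).2⟩)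
    (fun u s => hM ((π u : ℝ), (π s : ℝ)) ⟨(π u).2, (π s).2⟩) hft hgt
  simp only [π, indicator_of_mem ht', projIcc_of_mem _ ht'] at key
  refine key.congr' ?_
  filter_upwards [nhdsWithin_le_nhds ((tendsto_Icc_sub_mul_add_mul_smallSets t α β).eventually
    (eventually_smallSets_subset.2 (Icc_mem_nhds ht.1 ht.2)))] with r hr
  congr 1
  refine setIntegral_triangle_congr fun u hu s hs => ?_
  simp only [indicator_of_mem (hr hu), indicator_of_mem (hr hs), projIcc_of_mem _ (hr hu),
    projIcc_of_mem _ (hr hs)]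

/-- Double-integral localization over a shrinking triangle: for bounded measurable `f, g` on
`[0,1]`, a continuous kernel `K` on `[0,1]²`, and `α, β ≥ 0` with `α + β > 0`, for almost every
`t ∈ (0,1)` one has
`(1/r²) ∫_{t-rβ}^{t+rα} ∫_{t-rβ}^{u} f(u) K(u,s) g(s) ds du → ((α+β)²/2)·f(t) K(t,t) g(t)`
as `r → 0⁺`. -/
theorem ae_tendsto_triangle_double_integral
    (α β : ℝ) (hα : 0 ≤ α) (hβ : 0 ≤ β) (hαβ : 0 < α + β)
    (f g : ℝ → ℝ) (hf : Measurable f) (hg : Measurable g)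
    (Cf : ℝ) (hfb : ∀ t ∈ Set.Icc (0 : ℝ) 1, |f t| ≤ Cf)
    (Cg : ℝ) (hgb : ∀ t ∈ Set.Icc (0 : ℝ) 1, |g t| ≤ Cg)
    (K : ℝ → ℝ → ℝ)
    (hK : ContinuousOn (fun p : ℝ × ℝ => K p.1 p.2) (Set.Icc 0 1 ×ˢ Set.Icc 0 1)) :
    ∀ᵐ t ∂(volume : Measure ℝ), t ∈ Set.Ioo (0 : ℝ) 1 →
      Tendsto
        (fun r : ℝ => (1 / r ^ 2) *
          ∫ u in Set.Icc (t - r * β) (t + r * α),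
            ∫ s in Set.Icc (t - r * β) u, f u * K u s * g s)
        (nhdsWithin 0 (Set.Ioi 0))
        (nhds (((α + β) ^ 2 / 2) * (f t * K t t * g t))) :=
  ae_tendsto_triangle_double_integral_general α β hαβ f g hf hg Cf hfb Cg hgb K hK
end
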